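/- arXiv:2206.00975 — 3 statements merged into one kernel-verified Lean document; each statement's English description precedes it below -/
import Mathlib

section
/- Let A ∈ ℂ^{s×s} and B ∈ ℂ^{t×t} be positive semidefinite Hermitian matrices, E ∈ ℂ^{s×t}, and α, δ > 0 with ‖A‖₂ ≤ α and σ_min(B) ≥ α + δ. If X solves AX − XB = A^{1/2} E B^{1/2}, then ‖X‖_F ≤ ‖E‖_F / χ(α, α+δ), where χ(a,b) = |a−b|/√(ab). -/
open Matrix BigOperators

/-- Frobenius norm of a complex matrix. -/
noncomputable def frob {p q : Type*} [Fintype p] [Fintype q] (A : Matrix p q ℂ) : ℝ :=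
  Real.sqrt (∑ i, ∑ j, ‖A i j‖ ^ 2)

/-- Euclidean (ℓ₂) norm of a complex vector. -/
noncomputable def enorm {q : Type*} [Fintype q] (x : q → ℂ) : ℝ :=
  Real.sqrt (∑ i, ‖x i‖ ^ 2)

/-- Spectral norm (operator 2-norm) of a complex matrix. -/
noncomputable def specNorm {p q : Type*} [Fintype p] [Fintype q] (A : Matrix p q ℂ) : ℝ :=
  sSup {r : ℝ | ∃ x : q → ℂ, _root_.enorm x ≤ 1 ∧ r = _root_.enorm (A.mulVec x)}

/-- The relative gap function χ(a,b) = |a−b|/√(ab). -/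
noncomputable def chi (a b : ℝ) : ℝ := |a - b| / Real.sqrt (a * b)
open scoped ComplexOrder

/- ### Auxiliary lemmas -/

lemma sum_sq_eq_trace {p q : Type*} [Fintype p] [Fintype q] (A : Matrix p q ℂ) :
    ((Aᴴ * A).trace).re = ∑ i, ∑ j, ‖A i j‖ ^ 2 := by
  have h : ((Aᴴ * A).trace) = ∑ j, ∑ i, (‖A i j‖:ℂ) ^ 2 := by
    rw [Matrix.trace]
    congr 1; ext j
    simp only [Matrix.diag_apply, Matrix.mul_apply, Matrix.conjTranspose_apply]
    congr 1; ext i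
    rw [Complex.star_def, Complex.conj_mul']
  rw [h, Finset.sum_comm]
  simp [Complex.re_sum, ← Complex.ofReal_pow]

lemma frob_conj {p q : Type*} [Fintype p] [DecidableEq p] [Fintype q] [DecidableEq q]
    (U : Matrix.unitaryGroup p ℂ) (V : Matrix.unitaryGroup q ℂ) (X : Matrix p q ℂ) :
    frob (star (U : Matrix p p ℂ) * X * (V : Matrix q q ℂ)) = frob X := by
  unfold frob
  congr 1
  rw [← sum_sq_eq_trace, ← sum_sq_eq_trace]
  have h1 : (star (U : Matrix p p ℂ) * X * (V : Matrix q q ℂ))ᴴ *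
      (star (U : Matrix p p ℂ) * X * (V : Matrix q q ℂ))
      = (V : Matrix q q ℂ)ᴴ * (Xᴴ * X) * (V : Matrix q q ℂ) := by
    have hU : (U : Matrix p p ℂ) * star (U : Matrix p p ℂ) = 1 :=
      (Matrix.mem_unitaryGroup_iff).mp U.2
    simp only [Matrix.conjTranspose_mul, Matrix.conjTranspose_conjTranspose,
      Matrix.star_eq_conjTranspose]
    rw [Matrix.mul_assoc, Matrix.mul_assoc, Matrix.mul_assoc]
    have hU' : (↑U : Matrix p p ℂ) * (↑U : Matrix p p ℂ)ᴴ = 1 := by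
      rw [← Matrix.star_eq_conjTranspose]; exact hU
    rw [show (↑U : Matrix p p ℂ) * ((↑U : Matrix p p ℂ)ᴴ * (X * (V : Matrix q q ℂ))) =
      ((↑U : Matrix p p ℂ) * (↑U : Matrix p p ℂ)ᴴ) * (X * (V : Matrix q q ℂ)) from
      (Matrix.mul_assoc _ _ _).symm]
    rw [hU', Matrix.one_mul]
    simp [Matrix.mul_assoc]
  rw [h1, Matrix.trace_mul_cycle]
  have hV : (V : Matrix q q ℂ) * (V : Matrix q q ℂ)ᴴ = 1 := by
    rw [← Matrix.star_eq_conjTranspose]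
    exact (Matrix.mem_unitaryGroup_iff).mp V.2
  rw [← Matrix.mul_assoc, hV, Matrix.one_mul]

lemma enorm_mulVec_le {p q : Type*} [Fintype p] [Fintype q] (A : Matrix p q ℂ) (x : q → ℂ) :
    _root_.enorm (A.mulVec x) ≤ frob A * _root_.enorm x := by
  rw [_root_.enorm, frob, _root_.enorm, ← Real.sqrt_mul (by positivity)]
  apply Real.sqrt_le_sqrt
  rw [Finset.sum_mul]
  apply Finset.sum_le_sum
  intro i _
  calc ‖A.mulVec x i‖ ^ 2 ≤ (∑ j, ‖A i j‖ * ‖x j‖) ^ 2 := by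
        apply pow_le_pow_left₀ (norm_nonneg _)
        simp only [Matrix.mulVec, dotProduct]
        exact (norm_sum_le _ _).trans_eq (by simp [norm_mul])
    _ ≤ (∑ j, ‖A i j‖ ^ 2) * (∑ j, ‖x j‖ ^ 2) := Finset.sum_mul_sq_le_sq_mul_sq _ _ _

lemma specNorm_bdd {p q : Type*} [Fintype p] [Fintype q] (A : Matrix p q ℂ) :
    BddAbove {r : ℝ | ∃ x : q → ℂ, _root_.enorm x ≤ 1 ∧ r = _root_.enorm (A.mulVec x)} := by
  refine ⟨frob A, ?_⟩
  rintro r ⟨x, hx, rfl⟩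
  calc _root_.enorm (A.mulVec x) ≤ frob A * _root_.enorm x := enorm_mulVec_le A x
    _ ≤ frob A * 1 := by
        apply mul_le_mul_of_nonneg_left hx
        exact Real.sqrt_nonneg _
    _ = frob A := mul_one _

lemma enorm_smul_real {q : Type*} [Fintype q] (r : ℝ) (x : q → ℂ) :
    _root_.enorm (r • x) = |r| * _root_.enorm x := by
  unfold _root_.enorm
  rw [← Real.sqrt_sq_eq_abs, ← Real.sqrt_mul (sq_nonneg _)]
  congr 1
  rw [Finset.mul_sum]
  congr 1; ext i
  simp [Pi.smul_apply, norm_smul, mul_pow]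

lemma enorm_eigenvector {n : Type*} [Fintype n] [DecidableEq n] {A : Matrix n n ℂ}
    (hA : A.IsHermitian) (i : n) : _root_.enorm ⇑(hA.eigenvectorBasis i) = 1 := by
  have h := hA.eigenvectorBasis.orthonormal.1 i
  have h2 : ‖hA.eigenvectorBasis i‖ = Real.sqrt (∑ j, ‖hA.eigenvectorBasis i j‖ ^ 2) := by
    rw [EuclideanSpace.norm_eq]
  rw [_root_.enorm]
  rw [← h2, h]

lemma rc_ofReal (r : ℝ) : (RCLike.ofReal r : ℂ) = Complex.ofReal r := rfl

lemma key_ineq (α δ L W : ℝ) (hα : 0 < α) (hδ : 0 < δ) (hL0 : 0 ≤ L) (hLα : L ≤ α)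
    (hW : α + δ ≤ W) :
    δ * Real.sqrt (L * W) ≤ Real.sqrt (α * (α + δ)) * (W - L) := by
  have hWL : δ ≤ W - L := by linarith
  have hu : 0 ≤ W - (α+δ) := by linarith
  have hg : 0 ≤ α - L := by linarith
  have h2a : δ^2 * W ≤ (α+δ) * (W-L)^2 := by
    nlinarith [mul_nonneg (mul_nonneg hα.le hδ.le) hu, mul_nonneg (mul_nonneg hδ.le hδ.le) hu,
      mul_nonneg (add_pos hα hδ).le (sq_nonneg (W - (α+δ))),
      mul_nonneg (add_pos hα hδ).le (sq_nonneg (α - L)),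
      mul_nonneg (mul_nonneg (add_pos hα hδ).le hu) hg,
      mul_nonneg (mul_nonneg (add_pos hα hδ).le hδ.le) hg]
  have h2 : δ^2 * (L*W) ≤ (α*(α+δ)) * (W-L)^2 := by
    have hW0 : 0 ≤ W := by linarith
    calc δ^2 * (L*W) ≤ δ^2 * (α*W) := by
          apply mul_le_mul_of_nonneg_left _ (sq_nonneg _)
          exact mul_le_mul_of_nonneg_right hLα hW0
      _ = α * (δ^2 * W) := by ring
      _ ≤ α * ((α+δ) * (W-L)^2) := mul_le_mul_of_nonneg_left h2a hα.le
      _ = (α*(α+δ)) * (W-L)^2 := by ring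
  calc δ * Real.sqrt (L*W) = Real.sqrt (δ^2 * (L*W)) := by
        rw [Real.sqrt_mul (sq_nonneg _), Real.sqrt_sq hδ.le]
    _ ≤ Real.sqrt ((α*(α+δ)) * (W-L)^2) := Real.sqrt_le_sqrt h2
    _ = Real.sqrt (α*(α+δ)) * (W-L) := by
        rw [Real.sqrt_mul (by positivity), Real.sqrt_sq (by linarith)]

lemma conj_reduce {n : Type*} [Fintype n] [DecidableEq n] (U : Matrix.unitaryGroup n ℂ)
    (D : Matrix n n ℂ) :
    star (U : Matrix n n ℂ) * ((U : Matrix n n ℂ) * D * star (U : Matrix n n ℂ)) *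
      (U : Matrix n n ℂ) = D := by
  have h1 : star (U : Matrix n n ℂ) * (U : Matrix n n ℂ) = 1 :=
    Matrix.UnitaryGroup.star_mul_self U
  calc star (U:Matrix n n ℂ) * ((U:Matrix n n ℂ) * D * star (U:Matrix n n ℂ)) * (U:Matrix n n ℂ)
      = (star (U:Matrix n n ℂ) * (U:Matrix n n ℂ)) * D *
        (star (U:Matrix n n ℂ) * (U:Matrix n n ℂ)) := by
        simp only [Matrix.mul_assoc]
    _ = D := by rw [h1, Matrix.one_mul, Matrix.mul_one]

/-- Norm bound for the solution of the Sylvester equation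
AX − XB = A^{1/2} E B^{1/2}: ‖X‖_F ≤ ‖E‖_F / χ(α, α+δ). -/
theorem stmt2 {s t : ℕ} (A : Matrix (Fin s) (Fin s) ℂ) (B : Matrix (Fin t) (Fin t) ℂ)
    (E : Matrix (Fin s) (Fin t) ℂ) (α δ : ℝ) (hα : 0 < α) (hδ : 0 < δ)
    (hA : A.PosSemidef) (hB : B.PosSemidef)
    (hAbd : specNorm A ≤ α)
    (hBbd : ∀ x : Fin t → ℂ, (α + δ) * _root_.enorm x ^ 2 ≤ (star x ⬝ᵥ B.mulVec x).re)
    (As : Matrix (Fin s) (Fin s) ℂ) (Bs : Matrix (Fin t) (Fin t) ℂ)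
    (hAs : As.PosSemidef ∧ As * As = A) (hBs : Bs.PosSemidef ∧ Bs * Bs = B)
    (X : Matrix (Fin s) (Fin t) ℂ)
    (hX : A * X - X * B = As * E * Bs) :
    frob X ≤ frob E / chi α (α + δ) := by
  obtain ⟨hAs1, hAs2⟩ := hAs
  obtain ⟨hBs1, hBs2⟩ := hBs
  have hAh : A.IsHermitian := hA.1
  have hBh : B.IsHermitian := hB.1
  set U := hAh.eigenvectorUnitary with hUdef
  set V := hBh.eigenvectorUnitary with hVdef
  -- eigenvalue bounds
  have hlam0 : ∀ i, 0 ≤ hAh.eigenvalues i := hA.eigenvalues_nonneg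
  have hlam : ∀ i, hAh.eigenvalues i ≤ α := by
    intro i
    refine le_trans (le_csSup (specNorm_bdd A) ?_) hAbd
    refine ⟨⇑(hAh.eigenvectorBasis i), (enorm_eigenvector hAh i).le, ?_⟩
    rw [show A.mulVec ⇑(hAh.eigenvectorBasis i) =
      hAh.eigenvalues i • ⇑(hAh.eigenvectorBasis i) from hAh.mulVec_eigenvectorBasis i]
    rw [enorm_smul_real, enorm_eigenvector hAh i, mul_one, abs_of_nonneg (hlam0 i)]
  have homg : ∀ j, α + δ ≤ hBh.eigenvalues j := by
    intro j
    have hv : _root_.enorm ⇑(hBh.eigenvectorBasis j) = 1 := enorm_eigenvector hBh j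
    have h1 := hBbd ⇑(hBh.eigenvectorBasis j)
    rw [hv] at h1
    simp only [one_pow, mul_one] at h1
    rw [hBh.eigenvalues_eq j]
    simpa [RCLike.re_to_complex] using h1
  -- square root identification
  open MatrixOrder in have hAsq : As = CFC.sqrt A := (CFC.sqrt_unique hAs2 hAs1.nonneg).symm
  open MatrixOrder in have hBsq : Bs = CFC.sqrt B := (CFC.sqrt_unique hBs2 hBs1.nonneg).symm
  set sa : Fin s → ℂ := (RCLike.ofReal ∘ Real.sqrt ∘ hAh.eigenvalues) with hsadef
  set sb : Fin t → ℂ := (RCLike.ofReal ∘ Real.sqrt ∘ hBh.eigenvalues) with hsbdef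
  set SA : Matrix (Fin s) (Fin s) ℂ := Matrix.diagonal sa with hSAdef
  set SB : Matrix (Fin t) (Fin t) ℂ := Matrix.diagonal sb with hSBdef
  have hAsU : As = (U : Matrix (Fin s) (Fin s) ℂ) * SA * star (U : Matrix (Fin s) (Fin s) ℂ) := by
    open MatrixOrder in rw [hAsq, CFC.sqrt_eq_real_sqrt A hA.nonneg, cfcₙ_eq_cfc (hf0 := Real.sqrt_zero), hAh.cfc_eq, IsHermitian.cfc, Unitary.conjStarAlgAut_apply]
  have hBsV : Bs = (V : Matrix (Fin t) (Fin t) ℂ) * SB * star (V : Matrix (Fin t) (Fin t) ℂ) := by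
    open MatrixOrder in rw [hBsq, CFC.sqrt_eq_real_sqrt B hB.nonneg, cfcₙ_eq_cfc (hf0 := Real.sqrt_zero), hBh.cfc_eq, IsHermitian.cfc, Unitary.conjStarAlgAut_apply]
  set DA : Matrix (Fin s) (Fin s) ℂ := Matrix.diagonal (RCLike.ofReal ∘ hAh.eigenvalues) with hDAdef
  set DB : Matrix (Fin t) (Fin t) ℂ := Matrix.diagonal (RCLike.ofReal ∘ hBh.eigenvalues) with hDBdef
  have hU1 : star (U : Matrix (Fin s) (Fin s) ℂ) * (U : Matrix (Fin s) (Fin s) ℂ) = 1 :=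
    Matrix.UnitaryGroup.star_mul_self U
  have hV1 : star (V : Matrix (Fin t) (Fin t) ℂ) * (V : Matrix (Fin t) (Fin t) ℂ) = 1 :=
    Matrix.UnitaryGroup.star_mul_self V
  have hU2 : (U : Matrix (Fin s) (Fin s) ℂ) * star (U : Matrix (Fin s) (Fin s) ℂ) = 1 :=
    (Matrix.mem_unitaryGroup_iff).mp U.2
  have hV2 : (V : Matrix (Fin t) (Fin t) ℂ) * star (V : Matrix (Fin t) (Fin t) ℂ) = 1 :=
    (Matrix.mem_unitaryGroup_iff).mp V.2
  set Y : Matrix (Fin s) (Fin t) ℂ :=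
    star (U : Matrix (Fin s) (Fin s) ℂ) * X * (V : Matrix (Fin t) (Fin t) ℂ) with hYdef
  set F : Matrix (Fin s) (Fin t) ℂ :=
    star (U : Matrix (Fin s) (Fin s) ℂ) * E * (V : Matrix (Fin t) (Fin t) ℂ) with hFdef
  -- the diagonalized equation
  have hA' : star (U : Matrix (Fin s) (Fin s) ℂ) * A = DA * star (U : Matrix (Fin s) (Fin s) ℂ) := by
    conv_lhs => rw [hAh.spectral_theorem, Unitary.conjStarAlgAut_apply]
    calc star (U:Matrix (Fin s) (Fin s) ℂ) *
        ((U:Matrix (Fin s) (Fin s) ℂ) * DA * star (U:Matrix (Fin s) (Fin s) ℂ))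
        = (star (U:Matrix (Fin s) (Fin s) ℂ) * (U:Matrix (Fin s) (Fin s) ℂ)) *
          (DA * star (U:Matrix (Fin s) (Fin s) ℂ)) := by simp only [Matrix.mul_assoc]
      _ = DA * star (U:Matrix (Fin s) (Fin s) ℂ) := by rw [hU1, Matrix.one_mul]
  have hB' : B * (V : Matrix (Fin t) (Fin t) ℂ) = (V : Matrix (Fin t) (Fin t) ℂ) * DB := by
    conv_lhs => rw [hBh.spectral_theorem, Unitary.conjStarAlgAut_apply]
    calc (V:Matrix (Fin t) (Fin t) ℂ) * DB * star (V:Matrix (Fin t) (Fin t) ℂ) *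
        (V:Matrix (Fin t) (Fin t) ℂ)
        = (V:Matrix (Fin t) (Fin t) ℂ) * (DB *
          (star (V:Matrix (Fin t) (Fin t) ℂ) * (V:Matrix (Fin t) (Fin t) ℂ))) := by
          simp only [Matrix.mul_assoc]
      _ = (V:Matrix (Fin t) (Fin t) ℂ) * DB := by rw [hV1, Matrix.mul_one]
  have t1 : star (U : Matrix (Fin s) (Fin s) ℂ) * (A * X) * (V : Matrix (Fin t) (Fin t) ℂ)
      = DA * Y := by
    rw [hYdef]
    calc star (U : Matrix (Fin s) (Fin s) ℂ) * (A * X) * (V : Matrix (Fin t) (Fin t) ℂ)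
        = (star (U : Matrix (Fin s) (Fin s) ℂ) * A) *
          (X * (V : Matrix (Fin t) (Fin t) ℂ)) := by simp only [Matrix.mul_assoc]
      _ = DA * (star (U : Matrix (Fin s) (Fin s) ℂ) * (X * (V : Matrix (Fin t) (Fin t) ℂ))) := by
          rw [hA']; simp only [Matrix.mul_assoc]
      _ = DA * (star (U : Matrix (Fin s) (Fin s) ℂ) * X * (V : Matrix (Fin t) (Fin t) ℂ)) := by
          simp only [Matrix.mul_assoc]
  have t2 : star (U : Matrix (Fin s) (Fin s) ℂ) * (X * B) * (V : Matrix (Fin t) (Fin t) ℂ)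
      = Y * DB := by
    rw [hYdef]
    calc star (U : Matrix (Fin s) (Fin s) ℂ) * (X * B) * (V : Matrix (Fin t) (Fin t) ℂ)
        = star (U : Matrix (Fin s) (Fin s) ℂ) * (X * (B * (V : Matrix (Fin t) (Fin t) ℂ))) := by
          simp only [Matrix.mul_assoc]
      _ = star (U : Matrix (Fin s) (Fin s) ℂ) * (X * ((V : Matrix (Fin t) (Fin t) ℂ) * DB)) := by
          rw [hB']
      _ = star (U : Matrix (Fin s) (Fin s) ℂ) * X * (V : Matrix (Fin t) (Fin t) ℂ) * DB := by
          simp only [Matrix.mul_assoc]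
  have e1 : star (U : Matrix (Fin s) (Fin s) ℂ) * (A * X - X * B) *
      (V : Matrix (Fin t) (Fin t) ℂ) = DA * Y - Y * DB := by
    rw [Matrix.mul_sub, Matrix.sub_mul, t1, t2]
  have e2 : star (U : Matrix (Fin s) (Fin s) ℂ) * (As * E * Bs) *
      (V : Matrix (Fin t) (Fin t) ℂ) = SA * F * SB := by
    rw [hAsU, hBsV, hFdef]
    calc star (U : Matrix (Fin s) (Fin s) ℂ) *
        ((U : Matrix (Fin s) (Fin s) ℂ) * SA * star (U : Matrix (Fin s) (Fin s) ℂ) * E *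
          ((V : Matrix (Fin t) (Fin t) ℂ) * SB * star (V : Matrix (Fin t) (Fin t) ℂ))) *
        (V : Matrix (Fin t) (Fin t) ℂ)
        = (star (U : Matrix (Fin s) (Fin s) ℂ) * (U : Matrix (Fin s) (Fin s) ℂ)) *
          (SA * (star (U : Matrix (Fin s) (Fin s) ℂ) * (E *
            ((V : Matrix (Fin t) (Fin t) ℂ) * (SB * (star (V : Matrix (Fin t) (Fin t) ℂ) *
              (V : Matrix (Fin t) (Fin t) ℂ))))))) := by simp only [Matrix.mul_assoc]
      _ = SA * (star (U : Matrix (Fin s) (Fin s) ℂ) * (E * ((V : Matrix (Fin t) (Fin t) ℂ) * SB))) := by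
          rw [hU1, hV1, Matrix.one_mul, Matrix.mul_one]
      _ = SA * (star (U : Matrix (Fin s) (Fin s) ℂ) * E * (V : Matrix (Fin t) (Fin t) ℂ)) * SB := by
          simp only [Matrix.mul_assoc]
  have heq : DA * Y - Y * DB = SA * F * SB := by rw [← e1, ← e2, hX]
  -- entrywise bound
  set C : ℝ := Real.sqrt (α * (α + δ)) with hCdef
  have hC0 : 0 < C := Real.sqrt_pos.2 (by positivity)
  have hYbd : ∀ i j, δ * ‖Y i j‖ ≤ C * ‖F i j‖ := by
    intro i j
    set L := hAh.eigenvalues i with hLdef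
    set W := hBh.eigenvalues j with hWdef
    have h := congrFun (congrFun heq i) j
    simp only [Matrix.sub_apply, Matrix.diagonal_mul, Matrix.mul_diagonal,
      Function.comp_apply, hDAdef, hDBdef, hSAdef, hSBdef, hsadef, hsbdef] at h
    rw [← hLdef, ← hWdef] at h
    simp only [rc_ofReal] at h
    have h' : ((W - L : ℝ) : ℂ) * Y i j =
        -(((Real.sqrt L * Real.sqrt W : ℝ) : ℂ) * F i j) := by
      push_cast
      push_cast at h
      linear_combination -h
    have hn : (W - L) * ‖Y i j‖ = (Real.sqrt L * Real.sqrt W) * ‖F i j‖ := by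
      have := congrArg norm h'
      rw [norm_mul, norm_neg, norm_mul, Complex.norm_real, Complex.norm_real,
        Real.norm_eq_abs, Real.norm_eq_abs] at this
      rw [abs_of_nonneg (by linarith [hlam i, homg j] : (0:ℝ) ≤ W - L),
        abs_of_nonneg (by positivity)] at this
      exact this
    have hWL : 0 < W - L := by linarith [hlam i, homg j]
    have hkey := key_ineq α δ L W hα hδ (hlam0 i) (hlam i) (homg j)
    have hstep : δ * ((W - L) * ‖Y i j‖) ≤ (C * ‖F i j‖) * (W - L) := by
      rw [hn, ← Real.sqrt_mul (hlam0 i)]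
      calc δ * (Real.sqrt (L * W) * ‖F i j‖) = (δ * Real.sqrt (L * W)) * ‖F i j‖ := by ring
        _ ≤ (C * (W - L)) * ‖F i j‖ :=
            mul_le_mul_of_nonneg_right hkey (norm_nonneg _)
        _ = (C * ‖F i j‖) * (W - L) := by ring
    have : (δ * ‖Y i j‖) * (W - L) ≤ (C * ‖F i j‖) * (W - L) := by
      calc (δ * ‖Y i j‖) * (W - L) = δ * ((W - L) * ‖Y i j‖) := by ring
        _ ≤ (C * ‖F i j‖) * (W - L) := hstep
    exact le_of_mul_le_mul_right this hWL
  -- sum up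
  have hsum : frob Y ≤ (C / δ) * frob F := by
    rw [frob, frob]
    rw [show (C / δ) * Real.sqrt (∑ i, ∑ j, ‖F i j‖ ^ 2)
        = Real.sqrt ((C / δ)^2 * ∑ i, ∑ j, ‖F i j‖ ^ 2) by
      rw [Real.sqrt_mul (sq_nonneg _), Real.sqrt_sq (by positivity)]]
    apply Real.sqrt_le_sqrt
    rw [Finset.mul_sum]
    apply Finset.sum_le_sum
    intro i _
    rw [Finset.mul_sum]
    apply Finset.sum_le_sum
    intro j _
    have h1 : ‖Y i j‖ ≤ (C / δ) * ‖F i j‖ := by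
      rw [div_mul_eq_mul_div, le_div_iff₀ hδ]
      calc ‖Y i j‖ * δ = δ * ‖Y i j‖ := by ring
        _ ≤ C * ‖F i j‖ := hYbd i j
    calc ‖Y i j‖ ^ 2 ≤ ((C / δ) * ‖F i j‖) ^ 2 := pow_le_pow_left₀ (norm_nonneg _) h1 2
      _ = (C / δ)^2 * ‖F i j‖ ^ 2 := by ring
  have hfX : frob Y = frob X := frob_conj U V X
  have hfE : frob F = frob E := frob_conj U V E
  have hchi : chi α (α + δ) = δ / C := by
    rw [chi, hCdef, show α - (α + δ) = -δ by ring, abs_neg, abs_of_pos hδ]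
  rw [hchi, div_div_eq_mul_div, ← hfX]
  calc frob Y ≤ (C / δ) * frob F := hsum
    _ = frob E * C / δ := by rw [hfE]; ring
end

section
/- Multiplicative sin-theta theorem (Frobenius norm version): Let A ∈ ℂ^{m×n} have thin SVD A = UΣV* with Σ = diag(σ₁ ≥ … ≥ σ_n) and V = [V₁ V₂] with V₂ ∈ ℂ^{n×k}. Let X ∈ ℂ^{m×s} (m ≥ s ≥ n) be such that X*U has full column rank, with thin QR factorization X*U = QR, and let à = X*A have SVD with singular values σ̃₁ ≥ … ≥ σ̃_n and right singular vector matrix [Ṽ₁ Ṽ₂], Ṽ₂ ∈ ℂ^{n×k}. If there exist α, δ > 0 with σ_{n−k} ≥ α + δ and σ̃_{n−k+1} ≤ α, then ‖sin Θ(V₂, Ṽ₂)‖_F ≤ ‖R − R^{−*}‖_F / χ(α², (α+δ)²), where χ(a,b) = |a−b|/√(ab). -/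
open Matrix BigOperators

/-!
With `P = Ṽᴴ V`, the two factorizations `Xᴴ A = Q R Σ Vᴴ = Ũ Σ̃ Ṽᴴ` give the Sylvester equation
`Σ̃² P - P Σ² = Σ̃ Ũᴴ Q (R - R⁻ᴴ) Σ`, since `Rᴴ R - 1 = Rᴴ (R - R⁻ᴴ)`. On the block `Ṽ₂ᴴ V₁`
an entry `w` satisfies `(σ̃ⱼ² - σᵢ²) w = σ̃ⱼ g σᵢ` with `σ̃ⱼ ≤ α < α + δ ≤ σᵢ`, whence
`|w| χ(α², (α+δ)²) ≤ |g|`. Summing squares and using that the isometries `Ũ` and `Q` do not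
increase the Frobenius norm gives the bound.
-/

section Frobenius

variable {p q r : Type*} [Fintype p] [Fintype q] [Fintype r]

lemma frob_nonneg (A : Matrix p q ℂ) : 0 ≤ frob A := Real.sqrt_nonneg _

lemma frob_sq_eq_re_trace (A : Matrix p q ℂ) : frob A ^ 2 = (Aᴴ * A).trace.re := by
  have hsum : (Aᴴ * A).trace = ((∑ i, ∑ j, ‖A i j‖ ^ 2 : ℝ) : ℂ) := by
    simp only [Matrix.trace, Matrix.diag, Matrix.mul_apply, Matrix.conjTranspose_apply]
    rw [Finset.sum_comm]
    push_cast
    congr 1; ext i; congr 1; ext j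
    exact Complex.conj_mul' (A i j)
  rw [frob, Real.sq_sqrt (by positivity), hsum, Complex.ofReal_re]

lemma frob_mul_le_of_forall_norm_mul_le {A B : Matrix p q ℂ} {c : ℝ} (hc : 0 ≤ c)
    (h : ∀ i j, ‖A i j‖ * c ≤ ‖B i j‖) : frob A * c ≤ frob B := by
  rw [frob, frob, ← Real.sqrt_sq hc, ← Real.sqrt_mul (by positivity), Finset.sum_mul]
  refine Real.sqrt_le_sqrt (Finset.sum_le_sum fun i _ => ?_)
  rw [Finset.sum_mul]
  refine Finset.sum_le_sum fun j _ => ?_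
  rw [← mul_pow]
  exact pow_le_pow_left₀ (by positivity) (h i j) 2

lemma frob_toBlocks₂₁_le {t : Type*} [Fintype t] (A : Matrix (p ⊕ q) (r ⊕ t) ℂ) :
    frob A.toBlocks₂₁ ≤ frob A := by
  refine Real.sqrt_le_sqrt ?_
  rw [Fintype.sum_sum_type]
  refine le_add_of_nonneg_of_le (by positivity) (Finset.sum_le_sum fun i _ => ?_)
  rw [Fintype.sum_sum_type]
  exact le_add_of_nonneg_right (by positivity)

lemma frob_mul_of_conjTranspose_mul_self_eq_one [DecidableEq q] {Q : Matrix p q ℂ}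
    (hQ : Qᴴ * Q = 1) (D : Matrix q r ℂ) : frob (Q * D) = frob D := by
  have h : (Q * D)ᴴ * (Q * D) = Dᴴ * D := by
    rw [conjTranspose_mul, Matrix.mul_assoc, ← Matrix.mul_assoc Qᴴ, hQ, Matrix.one_mul]
  rw [← sq_eq_sq₀ (frob_nonneg _) (frob_nonneg _), frob_sq_eq_re_trace, frob_sq_eq_re_trace, h]

lemma frob_conjTranspose_mul_le [DecidableEq q] {W : Matrix p q ℂ}
    (hW : Wᴴ * W = 1) (Y : Matrix p r ℂ) : frob (Wᴴ * Y) ≤ frob Y := by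
  set N := Y - W * (Wᴴ * Y)
  have hgram : (Wᴴ * Y)ᴴ * (Wᴴ * Y) + Nᴴ * N = Yᴴ * Y := by
    simp only [N, conjTranspose_sub, conjTranspose_mul, conjTranspose_conjTranspose,
      Matrix.sub_mul, Matrix.mul_sub, Matrix.mul_assoc]
    simp only [← Matrix.mul_assoc Wᴴ W, hW, Matrix.one_mul]
    abel
  have h := congrArg (fun M => M.trace.re) hgram
  simp only [trace_add, Complex.add_re, ← frob_sq_eq_re_trace] at h
  nlinarith [frob_nonneg (Wᴴ * Y), frob_nonneg Y, sq_nonneg (frob N)]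

end Frobenius

section Gap

variable {α β : ℝ}

lemma chi_sq_sq (hα : 0 < α) (hαβ : α ≤ β) :
    chi (α ^ 2) (β ^ 2) = (β ^ 2 - α ^ 2) / (α * β) := by
  have hβ : 0 < β := hα.trans_le hαβ
  rw [chi, abs_sub_comm, abs_of_nonneg (by nlinarith), ← mul_pow,
    Real.sqrt_sq (by positivity)]

lemma chi_sq_sq_pos (hα : 0 < α) (hαβ : α < β) : 0 < chi (α ^ 2) (β ^ 2) := by
  rw [chi_sq_sq hα hαβ.le]
  exact div_pos (by nlinarith) (mul_pos hα (hα.trans hαβ))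

lemma mul_mul_chi_sq_sq_le {a b : ℝ} (hα : 0 < α) (hαβ : α ≤ β)
    (ha : 0 ≤ a) (haα : a ≤ α) (hβb : β ≤ b) :
    a * b * chi (α ^ 2) (β ^ 2) ≤ b ^ 2 - a ^ 2 := by
  have hβ : 0 < β := hα.trans_le hαβ
  have hb : 0 < b := hβ.trans_le hβb
  rw [chi_sq_sq hα hαβ, ← mul_div_assoc, div_le_iff₀ (mul_pos hα hβ)]
  -- `α β (b² - a²) - a b (β² - α²) = (α b - a β)(β b + α a)`
  nlinarith [mul_nonneg (sub_nonneg.2 (mul_le_mul haα hβb hβ.le hα.le))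
    (by positivity : 0 ≤ β * b + α * a)]

lemma norm_mul_chi_sq_sq_le {a b : ℝ} {w g : ℂ} (hα : 0 < α) (hαβ : α < β)
    (ha : 0 ≤ a) (haα : a ≤ α) (hβb : β ≤ b)
    (h : ((a ^ 2 - b ^ 2 : ℝ) : ℂ) * w = a * g * b) :
    ‖w‖ * chi (α ^ 2) (β ^ 2) ≤ ‖g‖ := by
  have hb : 0 < b := hα.trans (hαβ.trans_le hβb)
  have hgap : 0 < b ^ 2 - a ^ 2 := by nlinarith
  have hnorm : (b ^ 2 - a ^ 2) * ‖w‖ = a * b * ‖g‖ := by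
    have := congrArg norm h
    simp only [norm_mul, Complex.norm_real, Real.norm_eq_abs, abs_of_nonneg ha,
      abs_of_pos hb, abs_sub_comm (a ^ 2), abs_of_pos hgap] at this
    linarith
  refine le_of_mul_le_mul_left ?_ hgap
  calc (b ^ 2 - a ^ 2) * (‖w‖ * chi (α ^ 2) (β ^ 2))
      = a * b * chi (α ^ 2) (β ^ 2) * ‖g‖ := by rw [← mul_assoc, hnorm]; ring
    _ ≤ (b ^ 2 - a ^ 2) * ‖g‖ :=
      mul_le_mul_of_nonneg_right (mul_mul_chi_sq_sq_le hα hαβ.le ha haα hβb) (norm_nonneg _)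

end Gap

section Sylvester

variable {l n s : Type*} [Fintype l] [Fintype n] [Fintype s] [DecidableEq n]

lemma conjTranspose_mul_mul_eq_of_mul_eq_mul {Q Ut : Matrix s n ℂ} {R S St : Matrix n n ℂ}
    {V Vt : Matrix l n ℂ} (hS : S.IsHermitian) (hSt : St.IsHermitian) (hQ : Qᴴ * Q = 1)
    (hVt : Vtᴴ * Vt = 1) (hT : Q * R * S * Vᴴ = Ut * St * Vtᴴ) :
    Vtᴴ * V * S * Rᴴ = St * Utᴴ * Q := by
  have h := congrArg (fun M => Vtᴴ * Mᴴ * Q) hT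
  simp only [conjTranspose_mul, conjTranspose_conjTranspose, hS.eq, hSt.eq,
    Matrix.mul_assoc, hQ, Matrix.mul_one] at h
  simpa only [← Matrix.mul_assoc, hVt, Matrix.one_mul] using h

lemma sylvester_of_mul_eq_mul {Q Ut : Matrix s n ℂ} {R S St : Matrix n n ℂ}
    {V Vt : Matrix l n ℂ} (hS : S.IsHermitian) (hSt : St.IsHermitian) (hQ : Qᴴ * Q = 1)
    (hR : IsUnit R.det) (hV : Vᴴ * V = 1) (hUt : Utᴴ * Ut = 1) (hVt : Vtᴴ * Vt = 1)
    (hT : Q * R * S * Vᴴ = Ut * St * Vtᴴ) :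
    St * St * (Vtᴴ * V) - Vtᴴ * V * (S * S) = St * (Utᴴ * Q * (R - (R⁻¹)ᴴ)) * S := by
  have hleft : Utᴴ * Q * R * S = St * (Vtᴴ * V) := by
    have h := congrArg (fun M => Utᴴ * M * V) hT
    simpa only [Matrix.mul_assoc, hV, hUt, Matrix.mul_one, ← Matrix.mul_assoc Utᴴ Ut,
      Matrix.one_mul] using h
  have hright := conjTranspose_mul_mul_eq_of_mul_eq_mul hS hSt hQ hVt hT
  have hRinv : Rᴴ * (R⁻¹)ᴴ = 1 := by
    rw [← conjTranspose_mul, nonsing_inv_mul R hR, conjTranspose_one]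
  calc St * St * (Vtᴴ * V) - Vtᴴ * V * (S * S)
      = St * (Utᴴ * Q * R * S) - Vtᴴ * V * S * (Rᴴ * (R⁻¹)ᴴ) * S := by
        rw [hleft, hRinv]; simp only [Matrix.mul_assoc, Matrix.mul_one]
    _ = St * Utᴴ * Q * R * S - Vtᴴ * V * S * Rᴴ * (R⁻¹)ᴴ * S := by
        simp only [Matrix.mul_assoc]
    _ = St * Utᴴ * Q * (R - (R⁻¹)ᴴ) * S := by
        rw [← hright]; simp only [Matrix.mul_sub, Matrix.sub_mul, Matrix.mul_assoc]
    _ = St * (Utᴴ * Q * (R - (R⁻¹)ᴴ)) * S := by simp only [Matrix.mul_assoc]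

end Sylvester

theorem stmt10_general {m s nk k : ℕ}
    (A U : Matrix (Fin m) (Fin nk ⊕ Fin k) ℂ)
    (σ : Fin nk ⊕ Fin k → ℝ)
    (V₁ : Matrix (Fin nk ⊕ Fin k) (Fin nk) ℂ) (V₂ : Matrix (Fin nk ⊕ Fin k) (Fin k) ℂ)
    (hV : Matrix.fromCols V₁ V₂ * (Matrix.fromCols V₁ V₂)ᴴ = 1)
    (hA : A = U * Matrix.diagonal (fun i => (σ i : ℂ)) * (Matrix.fromCols V₁ V₂)ᴴ)
    (X : Matrix (Fin m) (Fin s) ℂ)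
    (Q : Matrix (Fin s) (Fin nk ⊕ Fin k) ℂ)
    (R : Matrix (Fin nk ⊕ Fin k) (Fin nk ⊕ Fin k) ℂ)
    (hQ : Qᴴ * Q = 1) (hR : IsUnit R.det) (hQR : Xᴴ * U = Q * R)
    (Ut : Matrix (Fin s) (Fin nk ⊕ Fin k) ℂ) (σt : Fin nk ⊕ Fin k → ℝ)
    (Vt₁ : Matrix (Fin nk ⊕ Fin k) (Fin nk) ℂ) (Vt₂ : Matrix (Fin nk ⊕ Fin k) (Fin k) ℂ)
    (hUt : Utᴴ * Ut = 1)
    (hVt : Matrix.fromCols Vt₁ Vt₂ * (Matrix.fromCols Vt₁ Vt₂)ᴴ = 1)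
    (hσt0 : ∀ i, 0 ≤ σt i)
    (hAt : Xᴴ * A
        = Ut * Matrix.diagonal (fun i => (σt i : ℂ)) * (Matrix.fromCols Vt₁ Vt₂)ᴴ)
    (α δ : ℝ) (hα : 0 < α) (hδ : 0 < δ)
    (hgap1 : ∀ i, α + δ ≤ σ (Sum.inl i)) (hgap2 : ∀ j, σt (Sum.inr j) ≤ α) :
    frob (Vt₂ᴴ * V₁) ≤ frob (R - (R⁻¹)ᴴ) / chi (α ^ 2) ((α + δ) ^ 2) := by
  have hαβ : α < α + δ := lt_add_of_pos_right α hδ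
  have hchi := chi_sq_sq_pos hα hαβ
  have hT : Q * R * diagonal (fun i => (σ i : ℂ)) * (fromCols V₁ V₂)ᴴ
      = Ut * diagonal (fun i => (σt i : ℂ)) * (fromCols Vt₁ Vt₂)ᴴ := by
    rw [← hQR, ← hAt, hA]; simp only [Matrix.mul_assoc]
  have hsyl := sylvester_of_mul_eq_mul
    (isHermitian_diagonal_iff.2 fun i => Complex.conj_ofReal _)
    (isHermitian_diagonal_iff.2 fun i => Complex.conj_ofReal _)
    hQ hR (mul_eq_one_comm.mp hV) hUt (mul_eq_one_comm.mp hVt) hT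
  set K := Utᴴ * Q * (R - (R⁻¹)ᴴ)
  have hentry : ∀ j i,
      ‖(Vt₂ᴴ * V₁) j i‖ * chi (α ^ 2) ((α + δ) ^ 2) ≤ ‖K (Sum.inr j) (Sum.inl i)‖ := by
    intro j i
    have h := congrFun (congrFun hsyl (Sum.inr j)) (Sum.inl i)
    have hP :
        ((fromCols Vt₁ Vt₂)ᴴ * fromCols V₁ V₂) (Sum.inr j) (Sum.inl i) = (Vt₂ᴴ * V₁) j i := by
      rw [conjTranspose_fromCols_eq_fromRows_conjTranspose, fromRows_mul_fromCols,
        fromBlocks_apply₂₁]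
    simp only [diagonal_mul_diagonal, Matrix.sub_apply, diagonal_mul, mul_diagonal, hP] at h
    exact norm_mul_chi_sq_sq_le hα hαβ (hσt0 _) (hgap2 j) (hgap1 i)
      (by push_cast; linear_combination h)
  rw [le_div_iff₀ hchi]
  calc frob (Vt₂ᴴ * V₁) * chi (α ^ 2) ((α + δ) ^ 2)
      ≤ frob K.toBlocks₂₁ := frob_mul_le_of_forall_norm_mul_le hchi.le hentry
    _ ≤ frob K := frob_toBlocks₂₁_le K
    _ ≤ frob (Q * (R - (R⁻¹)ᴴ)) := by
        simpa only [K, Matrix.mul_assoc] using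
          frob_conjTranspose_mul_le hUt (Q * (R - (R⁻¹)ᴴ))
    _ = frob (R - (R⁻¹)ᴴ) := frob_mul_of_conjTranspose_mul_self_eq_one hQ _

/-- Multiplicative sin-theta theorem (Frobenius norm, Theorem 3.4):
with thin SVDs A = U Σ [V₁ V₂]* and X*A = Ũ Σ̃ [Ṽ₁ Ṽ₂]*, thin QR X*U = QR, and gap
condition σ_i ≥ α+δ for i ≤ n−k, σ̃_{n−k+j} ≤ α, one has
‖sin Θ(V₂, Ṽ₂)‖_F = ‖Ṽ₂*V₁‖_F ≤ ‖R − R^{−*}‖_F / χ(α², (α+δ)²). -/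
theorem stmt10 {m s nk k : ℕ}
    (A U : Matrix (Fin m) (Fin nk ⊕ Fin k) ℂ)
    (σ : Fin nk ⊕ Fin k → ℝ)
    (V₁ : Matrix (Fin nk ⊕ Fin k) (Fin nk) ℂ) (V₂ : Matrix (Fin nk ⊕ Fin k) (Fin k) ℂ)
    (hU : Uᴴ * U = 1)
    (hV : Matrix.fromCols V₁ V₂ * (Matrix.fromCols V₁ V₂)ᴴ = 1)
    (hσ0 : ∀ i, 0 ≤ σ i)
    (hA : A = U * Matrix.diagonal (fun i => (σ i : ℂ)) * (Matrix.fromCols V₁ V₂)ᴴ)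
    (X : Matrix (Fin m) (Fin s) ℂ)
    (Q : Matrix (Fin s) (Fin nk ⊕ Fin k) ℂ)
    (R : Matrix (Fin nk ⊕ Fin k) (Fin nk ⊕ Fin k) ℂ)
    (hQ : Qᴴ * Q = 1) (hR : IsUnit R.det) (hQR : Xᴴ * U = Q * R)
    (Ut : Matrix (Fin s) (Fin nk ⊕ Fin k) ℂ) (σt : Fin nk ⊕ Fin k → ℝ)
    (Vt₁ : Matrix (Fin nk ⊕ Fin k) (Fin nk) ℂ) (Vt₂ : Matrix (Fin nk ⊕ Fin k) (Fin k) ℂ)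
    (hUt : Utᴴ * Ut = 1)
    (hVt : Matrix.fromCols Vt₁ Vt₂ * (Matrix.fromCols Vt₁ Vt₂)ᴴ = 1)
    (hσt0 : ∀ i, 0 ≤ σt i)
    (hAt : Xᴴ * A
        = Ut * Matrix.diagonal (fun i => (σt i : ℂ)) * (Matrix.fromCols Vt₁ Vt₂)ᴴ)
    (α δ : ℝ) (hα : 0 < α) (hδ : 0 < δ)
    (hgap1 : ∀ i, α + δ ≤ σ (Sum.inl i)) (hgap2 : ∀ j, σt (Sum.inr j) ≤ α) :
    frob (Vt₂ᴴ * V₁) ≤ frob (R - (R⁻¹)ᴴ) / chi (α ^ 2) ((α + δ) ^ 2) :=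
  stmt10_general A U σ V₁ V₂ hV hA X Q R hQ hR hQR Ut σt Vt₁ Vt₂ hUt hVt hσt0 hAt α δ hα hδ hgap1
    hgap2
end

section
/- Multiplicative sin-theta theorem for subspaces of different dimensions: with A = UΣV*, V = [V₁ V₂ V₃] (V₁ with n−k columns, V₂ with k−ℓ columns, V₃ with ℓ columns), à = X*A with right singular vectors [Ṽ₁ Ṽ₂ Ṽ₃] partitioned the same way, X*U = QR a thin QR factorization with X*U full rank: if σ_i ≥ α+δ for i ≤ n−k and σ̃_{n−ℓ+j} ≤ α for 1 ≤ j ≤ ℓ, then ‖sin Θ([V₂ V₃], Ṽ₃)‖_F ≤ ‖R − R^{−*}‖_F / χ(α², (α+δ)²). -/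
open Matrix BigOperators

lemma aux_chi_ts (α δ t s : ℝ) (hα : 0 < α) (hδ : 0 < δ) (ht0 : 0 ≤ t) (ht : t ≤ α)
    (hs : α + δ ≤ s) :
    ((α+δ)^2 - α^2)/(α*(α+δ)) * t * s ≤ s^2 - t^2 := by
  have hβ : 0 < α + δ := by linarith
  have hden : 0 < α * (α + δ) := mul_pos hα hβ
  rw [div_mul_eq_mul_div, div_mul_eq_mul_div, div_le_iff₀ hden]
  nlinarith [mul_nonneg hβ.le (mul_nonneg (sub_nonneg.2 ht)
      (add_nonneg (mul_nonneg hα.le ht0) (sq_nonneg s))),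
    mul_nonneg ht0 (mul_nonneg (sub_nonneg.2 hs)
      (add_nonneg (sq_nonneg α) (mul_nonneg (by linarith : (0:ℝ) ≤ s) hβ.le)))]

lemma aux_entry (α δ t s : ℝ) (hα : 0 < α) (hδ : 0 < δ) (ht0 : 0 ≤ t) (ht : t ≤ α)
    (hs : α + δ ≤ s) (S E : ℂ)
    (heq : (t:ℂ) * E * (s:ℂ) = (t:ℂ)^2 * S - S * (s:ℂ)^2) :
    ((α+δ)^2 - α^2)/(α*(α+δ)) * ‖S‖ ≤ ‖E‖ := by
  set c := ((α+δ)^2 - α^2)/(α*(α+δ)) with hc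
  have hst : t < s := by linarith
  have hs0 : 0 < s := by linarith
  have hpos : 0 < s^2 - t^2 := by nlinarith
  have hnorm : t * s * ‖E‖ = (s^2 - t^2) * ‖S‖ := by
    have h1 : (t:ℂ) * E * (s:ℂ) = ((t*s : ℝ) : ℂ) * E := by push_cast; ring
    have h2 : (t:ℂ)^2 * S - S * (s:ℂ)^2 = ((t^2 - s^2 : ℝ) : ℂ) * S := by push_cast; ring
    have h := congrArg (fun z : ℂ => ‖z‖) heq
    simp only [h1, h2] at h
    rw [norm_mul, norm_mul, Complex.norm_real, Complex.norm_real,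
      Real.norm_eq_abs, Real.norm_eq_abs, abs_of_nonneg (mul_nonneg ht0 hs0.le),
      abs_of_nonpos (by nlinarith : t^2 - s^2 ≤ 0)] at h
    linarith [h]
  have hcts : c * t * s ≤ s^2 - t^2 := aux_chi_ts α δ t s hα hδ ht0 ht hs
  have h1 : 0 ≤ (s^2 - t^2 - c*t*s) * ‖E‖ := mul_nonneg (by linarith) (norm_nonneg E)
  have h2' : c * (t*s*‖E‖) = c * ((s^2-t^2)*‖S‖) := by rw [hnorm]
  have h3 : (s^2 - t^2) * (c*‖S‖) ≤ (s^2 - t^2) * ‖E‖ := by nlinarith [h1, h2']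
  exact le_of_mul_le_mul_left h3 hpos

lemma aux_colsum {p q : Type*} [Fintype p] [Fintype q] (C : Matrix p q ℂ) (j : q) :
    (Cᴴ * C) j j = ((∑ i, ‖C i j‖^2 : ℝ) : ℂ) := by
  simp only [Matrix.mul_apply, Matrix.conjTranspose_apply]
  push_cast
  congr 1
  funext i
  rw [mul_comm]
  simp [Complex.star_def, Complex.mul_conj, Complex.normSq_eq_norm_sq]

lemma aux_contract {p p' q r : Type*} [Fintype p] [Fintype p'] [Fintype q] [Fintype r]
    [DecidableEq q] (M : Matrix p q ℂ) (G : Matrix p' q ℂ) (B : Matrix q r ℂ)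
    (h : Mᴴ * M + Gᴴ * G = 1) :
    ∑ i, ∑ j, ‖(M*B) i j‖^2 ≤ ∑ i, ∑ j, ‖B i j‖^2 := by
  have key : ∀ j : r, ((∑ i, ‖(M*B) i j‖^2 : ℝ) : ℂ) + ((∑ i, ‖(G*B) i j‖^2 : ℝ) : ℂ)
      = ((∑ i, ‖B i j‖^2 : ℝ) : ℂ) := by
    intro j
    rw [← aux_colsum, ← aux_colsum, ← aux_colsum]
    have : (M*B)ᴴ * (M*B) + (G*B)ᴴ * (G*B) = Bᴴ * B := by
      rw [Matrix.conjTranspose_mul, Matrix.conjTranspose_mul, Matrix.mul_assoc,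
        Matrix.mul_assoc, ← Matrix.mul_assoc Mᴴ M B, ← Matrix.mul_assoc Gᴴ G B,
        ← Matrix.mul_add, ← Matrix.add_mul, h, Matrix.one_mul]
    calc ((M*B)ᴴ * (M*B)) j j + ((G*B)ᴴ * (G*B)) j j
        = ((M*B)ᴴ * (M*B) + (G*B)ᴴ * (G*B)) j j := rfl
      _ = (Bᴴ * B) j j := by rw [this]
  have key' : ∀ j : r, (∑ i, ‖(M*B) i j‖^2) + (∑ i, ‖(G*B) i j‖^2) = ∑ i, ‖B i j‖^2 := by
    intro j
    have := key j
    exact_mod_cast this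
  calc ∑ i, ∑ j, ‖(M*B) i j‖^2 = ∑ j, ∑ i, ‖(M*B) i j‖^2 := Finset.sum_comm
    _ ≤ ∑ j, ((∑ i, ‖(M*B) i j‖^2) + ∑ i, ‖(G*B) i j‖^2) :=
        Finset.sum_le_sum fun j _ => le_add_of_nonneg_right (by positivity)
    _ = ∑ j, ∑ i, ‖B i j‖^2 := by simp_rw [key']
    _ = ∑ i, ∑ j, ‖B i j‖^2 := Finset.sum_comm

lemma aux_diagH {ι : Type*} [Fintype ι] [DecidableEq ι] (τ : ι → ℝ) :
    (Matrix.diagonal fun i => (τ i : ℂ))ᴴ = Matrix.diagonal fun i => (τ i : ℂ) := by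
  rw [Matrix.diagonal_conjTranspose]
  have hv : (star fun i => ((τ i : ℂ))) = fun i => ((τ i : ℂ)) :=
    funext fun i => Complex.conj_ofReal (τ i)
  rw [hv]

lemma aux_sub_sum_inrr {a b c : Type*} [Fintype a] [Fintype b] [Fintype c]
    (f : a ⊕ (b ⊕ c) → ℝ) (hf : ∀ x, 0 ≤ f x) :
    ∑ i : c, f (Sum.inr (Sum.inr i)) ≤ ∑ x, f x := by
  rw [Fintype.sum_sum_type, Fintype.sum_sum_type]
  have h1 : 0 ≤ ∑ i : a, f (Sum.inl i) := Finset.sum_nonneg fun _ _ => hf _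
  have h2 : 0 ≤ ∑ i : b, f (Sum.inr (Sum.inl i)) := Finset.sum_nonneg fun _ _ => hf _
  linarith

lemma aux_sub_sum_inl {a b c : Type*} [Fintype a] [Fintype b] [Fintype c]
    (f : a ⊕ (b ⊕ c) → ℝ) (hf : ∀ x, 0 ≤ f x) :
    ∑ i : a, f (Sum.inl i) ≤ ∑ x, f x := by
  rw [Fintype.sum_sum_type]
  have h2 : 0 ≤ ∑ i : b ⊕ c, f (Sum.inr i) := Finset.sum_nonneg fun _ _ => hf _
  linarith

set_option maxHeartbeats 2000000 in
/-- Multiplicative sin-theta theorem for subspaces of different dimensions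
(Theorem 3.7): with V = [V₁ V₂ V₃] and right singular vectors [Ṽ₁ Ṽ₂ Ṽ₃] of X*A, if
σ_i ≥ α+δ for i ≤ n−k and σ̃_{n−ℓ+j} ≤ α, then
‖sin Θ([V₂ V₃], Ṽ₃)‖_F = ‖Ṽ₃*V₁‖_F ≤ ‖R − R^{−*}‖_F / χ(α², (α+δ)²). -/
theorem stmt11 {m s nk kl l : ℕ}
    (A U : Matrix (Fin m) (Fin nk ⊕ (Fin kl ⊕ Fin l)) ℂ)
    (σ : Fin nk ⊕ (Fin kl ⊕ Fin l) → ℝ)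
    (V₁ : Matrix (Fin nk ⊕ (Fin kl ⊕ Fin l)) (Fin nk) ℂ)
    (V₂ : Matrix (Fin nk ⊕ (Fin kl ⊕ Fin l)) (Fin kl) ℂ)
    (V₃ : Matrix (Fin nk ⊕ (Fin kl ⊕ Fin l)) (Fin l) ℂ)
    (hU : Uᴴ * U = 1)
    (hV : Matrix.fromCols V₁ (Matrix.fromCols V₂ V₃)
        * (Matrix.fromCols V₁ (Matrix.fromCols V₂ V₃))ᴴ = 1)
    (hσ0 : ∀ i, 0 ≤ σ i)
    (hA : A = U * Matrix.diagonal (fun i => (σ i : ℂ))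
        * (Matrix.fromCols V₁ (Matrix.fromCols V₂ V₃))ᴴ)
    (X : Matrix (Fin m) (Fin s) ℂ)
    (Q : Matrix (Fin s) (Fin nk ⊕ (Fin kl ⊕ Fin l)) ℂ)
    (R : Matrix (Fin nk ⊕ (Fin kl ⊕ Fin l)) (Fin nk ⊕ (Fin kl ⊕ Fin l)) ℂ)
    (hQ : Qᴴ * Q = 1) (hR : IsUnit R.det) (hQR : Xᴴ * U = Q * R)
    (Ut : Matrix (Fin s) (Fin nk ⊕ (Fin kl ⊕ Fin l)) ℂ)
    (σt : Fin nk ⊕ (Fin kl ⊕ Fin l) → ℝ)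
    (Vt₁ : Matrix (Fin nk ⊕ (Fin kl ⊕ Fin l)) (Fin nk) ℂ)
    (Vt₂ : Matrix (Fin nk ⊕ (Fin kl ⊕ Fin l)) (Fin kl) ℂ)
    (Vt₃ : Matrix (Fin nk ⊕ (Fin kl ⊕ Fin l)) (Fin l) ℂ)
    (hUt : Utᴴ * Ut = 1)
    (hVt : Matrix.fromCols Vt₁ (Matrix.fromCols Vt₂ Vt₃)
        * (Matrix.fromCols Vt₁ (Matrix.fromCols Vt₂ Vt₃))ᴴ = 1)
    (hσt0 : ∀ i, 0 ≤ σt i)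
    (hAt : Xᴴ * A = Ut * Matrix.diagonal (fun i => (σt i : ℂ))
        * (Matrix.fromCols Vt₁ (Matrix.fromCols Vt₂ Vt₃))ᴴ)
    (α δ : ℝ) (hα : 0 < α) (hδ : 0 < δ)
    (hgap1 : ∀ i, α + δ ≤ σ (Sum.inl i))
    (hgap2 : ∀ j, σt (Sum.inr (Sum.inr j)) ≤ α) :
    frob (Vt₃ᴴ * V₁) ≤ frob (R - (R⁻¹)ᴴ) / chi (α ^ 2) ((α + δ) ^ 2) := by
  set VV := Matrix.fromCols V₁ (Matrix.fromCols V₂ V₃) with hVVdef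
  set VVt := Matrix.fromCols Vt₁ (Matrix.fromCols Vt₂ Vt₃) with hVVtdef
  set DD := Matrix.diagonal (fun i => (σ i : ℂ)) with hDDdef
  set DDt := Matrix.diagonal (fun i => (σt i : ℂ)) with hDDtdef
  have hV' : VVᴴ * VV = 1 := mul_eq_one_comm.mp hV
  have hVt' : VVtᴴ * VVt = 1 := mul_eq_one_comm.mp hVt
  have hDH : DDᴴ = DD := by rw [hDDdef]; exact aux_diagH σ
  have hDtH : DDtᴴ = DDt := by rw [hDDtdef]; exact aux_diagH σt
  -- two expressions for Xᴴ A
  rw [hA, ← Matrix.mul_assoc, ← Matrix.mul_assoc, hQR] at hAt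
  have hE : Q * R * DD * VVᴴ = Ut * DDt * VVtᴴ := hAt
  -- key identity 1 : Σ̃ Ṽᴴ V = Utᴴ Q R Σ
  have key1 : DDt * (VVtᴴ * VV) = Utᴴ * Q * R * DD := by
    calc DDt * (VVtᴴ * VV) = (Utᴴ * Ut) * DDt * (VVtᴴ * VV) := by
          rw [hUt, Matrix.one_mul]
      _ = Utᴴ * (Ut * DDt * VVtᴴ) * VV := by simp only [Matrix.mul_assoc]
      _ = Utᴴ * (Q * R * DD * VVᴴ) * VV := by rw [hE]
      _ = Utᴴ * Q * R * DD * (VVᴴ * VV) := by simp only [Matrix.mul_assoc]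
      _ = Utᴴ * Q * R * DD := by rw [hV', Matrix.mul_one]
  -- conj transpose of hE
  have hEH : VV * (DD * (Rᴴ * Qᴴ)) = VVt * (DDt * Utᴴ) := by
    have h := congrArg Matrix.conjTranspose hE
    simp only [Matrix.conjTranspose_mul, Matrix.conjTranspose_conjTranspose, hDH, hDtH] at h
    exact h
  -- key identity 2 : Σ̃ (Utᴴ Q) = Ṽᴴ V Σ Rᴴ
  have key2 : DDt * (Utᴴ * Q) = VVtᴴ * VV * DD * Rᴴ := by
    calc DDt * (Utᴴ * Q) = (VVtᴴ * VVt) * DDt * (Utᴴ * Q) := by rw [hVt', Matrix.one_mul]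
      _ = VVtᴴ * (VVt * (DDt * Utᴴ)) * Q := by simp only [Matrix.mul_assoc]
      _ = VVtᴴ * (VV * (DD * (Rᴴ * Qᴴ))) * Q := by rw [← hEH]
      _ = VVtᴴ * VV * DD * Rᴴ * (Qᴴ * Q) := by simp only [Matrix.mul_assoc]
      _ = VVtᴴ * VV * DD * Rᴴ := by rw [hQ, Matrix.mul_one]
  set Mm := Utᴴ * Q with hMmdef
  set W := VVtᴴ * VV with hWdef
  set Bm := R - (R⁻¹)ᴴ with hBmdef
  have hRinv : Rᴴ * (R⁻¹)ᴴ = 1 := by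
    rw [← Matrix.conjTranspose_mul, Matrix.nonsing_inv_mul R hR, Matrix.conjTranspose_one]
  -- key identity 3
  have p1 : DDt * (Mm * R) * DD = DDt * (DDt * W) := by
    calc DDt * (Mm * R) * DD = DDt * (Mm * R * DD) := Matrix.mul_assoc _ _ _
      _ = DDt * (DDt * W) := by rw [← key1]
  have p2 : DDt * (Mm * (R⁻¹)ᴴ) * DD = W * (DD * DD) := by
    calc DDt * (Mm * (R⁻¹)ᴴ) * DD = DDt * Mm * (R⁻¹)ᴴ * DD := by
          rw [← Matrix.mul_assoc]
      _ = W * DD * Rᴴ * (R⁻¹)ᴴ * DD := by rw [key2]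
      _ = W * DD * (Rᴴ * (R⁻¹)ᴴ) * DD := by rw [Matrix.mul_assoc (W * DD) Rᴴ _]
      _ = W * DD * DD := by rw [hRinv, Matrix.mul_one]
      _ = W * (DD * DD) := Matrix.mul_assoc _ _ _
  have key3 : DDt * (Mm * Bm) * DD = DDt * (DDt * W) - W * (DD * DD) := by
    have hMB : Mm * Bm = Mm * R - Mm * (R⁻¹)ᴴ := Matrix.mul_sub _ _ _
    rw [hMB, Matrix.mul_sub, Matrix.sub_mul, p1, p2]
  -- entrywise consequences
  set c := ((α+δ)^2 - α^2)/(α*(α+δ)) with hcdef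
  have hβ : 0 < α + δ := by linarith
  have hcpos : 0 < c := div_pos (by nlinarith) (mul_pos hα hβ)
  have hWe : ∀ (i : Fin l) (j : Fin nk),
      W (Sum.inr (Sum.inr i)) (Sum.inl j) = (Vt₃ᴴ * V₁) i j := by
    intro i j
    rw [hWdef, hVVdef, hVVtdef]
    simp [Matrix.mul_apply, Matrix.conjTranspose_apply]
  have hentry : ∀ (i : Fin l) (j : Fin nk),
      c * ‖(Vt₃ᴴ * V₁) i j‖ ≤ ‖(Mm * Bm) (Sum.inr (Sum.inr i)) (Sum.inl j)‖ := by
    intro i j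
    set I := Sum.inr (Sum.inr i) with hI
    set J := (Sum.inl j : Fin nk ⊕ (Fin kl ⊕ Fin l)) with hJ
    have e3 := congrFun (congrFun key3 I) J
    rw [hDDdef, hDDtdef] at e3
    simp only [Matrix.mul_diagonal, Matrix.diagonal_mul, Matrix.sub_apply,
      Matrix.diagonal_mul_diagonal, Pi.mul_apply] at e3
    have heq : ((σt I : ℝ) : ℂ) * ((Mm * Bm) I J) * ((σ J : ℝ) : ℂ)
        = ((σt I : ℝ) : ℂ)^2 * ((Vt₃ᴴ * V₁) i j) - ((Vt₃ᴴ * V₁) i j) * ((σ J : ℝ) : ℂ)^2 := by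
      rw [← hWe i j]
      linear_combination e3
    exact aux_entry α δ (σt I) (σ J) hα hδ (hσt0 I) (hgap2 i) (hgap1 j) _ _ heq
  -- contraction setup
  have hGG : Mmᴴ * Mm + (Q - Ut * Mm)ᴴ * (Q - Ut * Mm) = 1 := by
    have e1 : (Ut * Mm)ᴴ = Mmᴴ * Utᴴ := Matrix.conjTranspose_mul _ _
    have keyG : (Q - Ut * Mm)ᴴ * (Q - Ut * Mm) = 1 - Mmᴴ * Mm := by
      rw [Matrix.conjTranspose_sub, e1, Matrix.sub_mul, Matrix.mul_sub, Matrix.mul_sub, hQ]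
      have e2 : Qᴴ * (Ut * Mm) = Mmᴴ * Mm := by
        rw [hMmdef, Matrix.conjTranspose_mul, Matrix.conjTranspose_conjTranspose,
          ← Matrix.mul_assoc]
      have e3 : Mmᴴ * Utᴴ * Q = Mmᴴ * Mm := by rw [Matrix.mul_assoc, hMmdef]
      have e4 : Mmᴴ * Utᴴ * (Ut * Mm) = Mmᴴ * Mm := by
        rw [Matrix.mul_assoc, ← Matrix.mul_assoc Utᴴ Ut Mm, hUt, Matrix.one_mul]
      rw [e2, e3, e4]
      abel
    rw [keyG]
    abel
  have hsum : ∑ I, ∑ J, ‖(Mm * Bm) I J‖^2 ≤ ∑ I, ∑ J, ‖Bm I J‖^2 :=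
    aux_contract Mm (Q - Ut * Mm) Bm hGG
  -- chi value
  have hchi : chi (α ^ 2) ((α + δ) ^ 2) = c := by
    have h1 : |α^2 - (α+δ)^2| = (α+δ)^2 - α^2 := by
      rw [abs_sub_comm, abs_of_pos (by nlinarith)]
    have h2 : Real.sqrt (α^2 * (α+δ)^2) = α*(α+δ) := by
      rw [show α^2*(α+δ)^2 = (α*(α+δ))^2 by ring, Real.sqrt_sq (by positivity)]
    rw [chi, h1, h2, hcdef]
  rw [hchi, le_div_iff₀ hcpos]
  -- Frobenius-norm assembly
  have hfs : frob (Vt₃ᴴ * V₁) * c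
      = Real.sqrt ((∑ i, ∑ j, ‖(Vt₃ᴴ * V₁) i j‖ ^ 2) * c^2) := by
    rw [frob, Real.sqrt_mul (by positivity), Real.sqrt_sq hcpos.le]
  rw [hfs, frob]
  apply Real.sqrt_le_sqrt
  calc (∑ i, ∑ j, ‖(Vt₃ᴴ * V₁) i j‖ ^ 2) * c^2
      = ∑ i, ∑ j, (c * ‖(Vt₃ᴴ * V₁) i j‖)^2 := by
        rw [Finset.sum_mul]
        exact Finset.sum_congr rfl fun i _ => by
          rw [Finset.sum_mul]
          exact Finset.sum_congr rfl fun j _ => by ring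
    _ ≤ ∑ i : Fin l, ∑ j : Fin nk,
          ‖(Mm * Bm) (Sum.inr (Sum.inr i)) (Sum.inl j)‖^2 := by
        apply Finset.sum_le_sum
        intro i _
        apply Finset.sum_le_sum
        intro j _
        exact pow_le_pow_left₀ (by positivity) (hentry i j) 2
    _ ≤ ∑ i : Fin l, ∑ J, ‖(Mm * Bm) (Sum.inr (Sum.inr i)) J‖^2 := by
        apply Finset.sum_le_sum
        intro i _
        exact aux_sub_sum_inl (fun J => ‖(Mm * Bm) (Sum.inr (Sum.inr i)) J‖^2)
          (fun _ => by positivity)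
    _ ≤ ∑ I, ∑ J, ‖(Mm * Bm) I J‖^2 :=
        aux_sub_sum_inrr (fun I => ∑ J, ‖(Mm * Bm) I J‖^2)
          (fun _ => Finset.sum_nonneg fun _ _ => by positivity)
    _ ≤ ∑ I, ∑ J, ‖Bm I J‖^2 := hsum
end
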